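/- arXiv:2004.05414 — 2 statements merged into one kernel-verified Lean document; each statement's English description precedes it below -/
import Mathlib

section
/- Suppose P(τ_1 ≤ t) = A t^p e^{−C/t}(1 + o(1)) as t → 0+ with C > 0, A > 0, p ∈ ℝ, for an iid sequence {τ_n} of nonnegative random variables. Let T_N = min{τ_1,...,τ_N}, a_N = C/(ln N)^2, and b_N = C/ln N + C p ln(ln N)/(ln N)^2 − C ln(A C^p)/(ln N)^2. Then (T_N − b_N)/a_N converges in distribution as N → ∞ to the Gumbel(0,1) law with survival function exp(−e^x). -/
/-!
By independence `P(T_N ≤ t) = 1 - (1 - F t)^N` with `F t = P(τ₀ ≤ t)`, and this tends to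
`1 - exp (-λ)` as soon as `N F(t_N) → λ`. Put `L = ln N` and `δ = p ln L - ln (A C^p) + x`;
then `t_N = b_N + x a_N = C (L + δ) / L²` and
`N A t_N^p e^{-C/t_N} = exp (x + p ln (1 + δ/L) - δ² / (L + δ))`, which tends to `e^x`
because `δ = O(ln L)`. Since `t_N → 0+`, the hypothesis on `F` turns this into `N F(t_N) → e^x`.
-/

open MeasureTheory ProbabilityTheory Real Filter Topology Asymptotics

lemma tendsto_log_pow_div_atTop (n : ℕ) : Tendsto (fun L => log L ^ n / L) atTop (𝓝 0) := by
  simpa using tendsto_pow_log_div_mul_add_atTop 1 0 n one_ne_zero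

lemma tendsto_affine_log_div_atTop (a c : ℝ) :
    Tendsto (fun L => (a * log L + c) / L) atTop (𝓝 0) := by
  have h := ((tendsto_log_pow_div_atTop 1).const_mul a).add
    ((tendsto_log_pow_div_atTop 0).const_mul c)
  simp only [mul_zero, add_zero] at h
  refine h.congr fun L => ?_
  ring

lemma tendsto_affine_log_sq_div_atTop (a c : ℝ) :
    Tendsto (fun L => (a * log L + c) ^ 2 / L) atTop (𝓝 0) := by
  have h := (((tendsto_log_pow_div_atTop 2).const_mul (a ^ 2)).add
    ((tendsto_log_pow_div_atTop 1).const_mul (2 * a * c))).add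
    ((tendsto_log_pow_div_atTop 0).const_mul (c ^ 2))
  simp only [mul_zero, add_zero] at h
  refine h.congr fun L => ?_
  ring

lemma exp_mul_tail_eq {A C L : ℝ} (p δ : ℝ) (hA : 0 < A) (hC : 0 < C) (hL : 0 < L)
    (hLδ : 0 < L + δ) :
    exp L * (A * (C * (L + δ) / L ^ 2) ^ p * exp (-C / (C * (L + δ) / L ^ 2))) =
      exp (log A + p * log C - p * log L + δ + p * log (1 + δ / L) - δ ^ 2 / (L + δ)) := by
  have h1δ : 0 < 1 + δ / L := by rw [one_add_div hL.ne']; positivity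
  have hlog : log (C * (L + δ) / L ^ 2) = log C - log L + log (1 + δ / L) := by
    rw [show C * (L + δ) / L ^ 2 = C / L * (1 + δ / L) by field_simp,
      log_mul (by positivity) h1δ.ne', log_div hC.ne' hL.ne']
  rw [rpow_def_of_pos (by positivity), hlog, ← exp_log hA, ← exp_add, ← exp_add, ← exp_add,
    exp_log hA]
  congr 1
  field_simp
  ring

lemma eventually_pos_and_add_affine_log_pos (a c : ℝ) :
    ∀ᶠ L in atTop, 0 < L ∧ 0 < L + (a * log L + c) := by
  filter_upwards [eventually_gt_atTop 0,
    (tendsto_affine_log_div_atTop a c).eventually (eventually_gt_nhds neg_one_lt_zero)]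
    with L hL hδ
  have h := mul_pos hL (show 0 < 1 + (a * log L + c) / L by linarith)
  rw [mul_add, mul_one, mul_div_cancel₀ _ hL.ne'] at h
  exact ⟨hL, h⟩

/-- `b_N + x a_N` at `L = ln N`. -/
noncomputable def gumbelThreshold (A C p x L : ℝ) : ℝ :=
  C * (L + (p * log L + (x - log (A * C ^ p)))) / L ^ 2

section Threshold

variable {A C : ℝ} (p x : ℝ)

lemma sub_div_le_iff_le_gumbelThreshold (hC : 0 < C) {L T : ℝ} (hL : 0 < L) :
    (T - (C / L + C * p * log L / L ^ 2 - C * log (A * C ^ p) / L ^ 2)) / (C / L ^ 2) ≤ x ↔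
      T ≤ gumbelThreshold A C p x L := by
  have hsum : C / L + C * p * log L / L ^ 2 - C * log (A * C ^ p) / L ^ 2 + x * (C / L ^ 2) =
      gumbelThreshold A C p x L := by
    unfold gumbelThreshold
    field_simp
    ring
  rw [div_le_iff₀ (by positivity), sub_le_iff_le_add', hsum]

lemma tendsto_gumbelThreshold_atTop (hC : 0 < C) :
    Tendsto (gumbelThreshold A C p x) atTop (𝓝[>] 0) := by
  have h := (tendsto_inv_atTop_zero.const_mul C).mul
    ((tendsto_const_nhds (x := 1)).add (tendsto_affine_log_div_atTop p (x - log (A * C ^ p))))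
  rw [mul_zero, zero_mul] at h
  refine tendsto_nhdsWithin_iff.2 ⟨h.congr' ?_, ?_⟩ <;>
    filter_upwards [eventually_pos_and_add_affine_log_pos p (x - log (A * C ^ p))]
      with L ⟨hL, hδL⟩
  · unfold gumbelThreshold
    field_simp
  · exact div_pos (mul_pos hC hδL) (by positivity)

lemma tendsto_exp_mul_tail_gumbelThreshold_atTop (hA : 0 < A) (hC : 0 < C) :
    Tendsto (fun L => exp L * (A * gumbelThreshold A C p x L ^ p *
      exp (-C / gumbelThreshold A C p x L))) atTop (𝓝 (exp x)) := by
  have hK : log (A * C ^ p) = log A + p * log C := by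
    rw [log_mul hA.ne' (by positivity), log_rpow hC]
  set c := x - log (A * C ^ p) with hc
  have h1 : Tendsto (fun L => 1 + (p * log L + c) / L) atTop (𝓝 1) := by
    simpa using (tendsto_affine_log_div_atTop p c).const_add 1
  have hE := ((tendsto_const_nhds (x := x)).add
    (((continuousAt_log one_ne_zero).tendsto.comp h1).const_mul p)).sub
    ((tendsto_affine_log_sq_div_atTop p c).div h1 one_ne_zero)
  simp only [log_one, mul_zero, add_zero, zero_div, sub_zero] at hE
  refine ((continuous_exp.tendsto x).comp hE).congr' ?_
  filter_upwards [eventually_pos_and_add_affine_log_pos p c] with L ⟨hL, hLδ⟩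
  rw [Function.comp_apply, gumbelThreshold, exp_mul_tail_eq p _ hA hC hL hLδ]
  simp only [Function.comp_apply, Pi.div_apply]
  have hsq : (p * log L + c) ^ 2 / (L + (p * log L + c)) =
      (p * log L + c) ^ 2 / L / (1 + (p * log L + c) / L) := by
    field_simp
  rw [hsq, hc, hK]
  congr 1
  ring

end Threshold

lemma ciInf_le_iff_of_finite {α ι : Type*} [ConditionallyCompleteLinearOrder α] [Finite ι]
    [Nonempty ι] {f : ι → α} {a : α} : ⨅ i, f i ≤ a ↔ ∃ i, f i ≤ a := by
  refine ⟨fun h => ?_, fun ⟨i, hi⟩ => (ciInf_le (Set.finite_range f).bddBelow i).trans hi⟩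
  obtain ⟨i, hi⟩ := exists_eq_ciInf_of_finite (f := f)
  exact ⟨i, hi ▸ h⟩

lemma measureReal_iInf_le_eq_one_sub_pow {Ω ι : Type*} [MeasurableSpace Ω] {μ : Measure Ω}
    [IsProbabilityMeasure μ] [Fintype ι] [Nonempty ι] {τ : ι → Ω → ℝ}
    (hmeas : ∀ i, Measurable (τ i)) (hindep : iIndepFun τ μ) {s q : ℝ}
    (hq : ∀ i, μ.real {ω | τ i ω ≤ s} = q) :
    μ.real {ω | ⨅ i, τ i ω ≤ s} = 1 - (1 - q) ^ Fintype.card ι := by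
  have hset : {ω | ⨅ i, τ i ω ≤ s} = (⋂ i, τ i ⁻¹' Set.Ioi s)ᶜ := by
    ext ω
    simp [ciInf_le_iff_of_finite]
  have hgt : ∀ i, μ.real (τ i ⁻¹' Set.Ioi s) = 1 - q := fun i => by
    rw [← Set.compl_Iic, Set.preimage_compl,
      probReal_compl_eq_one_sub (hmeas i measurableSet_Iic)]
    exact congrArg (1 - ·) (hq i)
  rw [hset, probReal_compl_eq_one_sub (MeasurableSet.iInter fun i => hmeas i measurableSet_Ioi),
    measureReal_def, hindep.meas_iInter fun i => ⟨Set.Ioi s, measurableSet_Ioi, rfl⟩,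
    ENNReal.toReal_prod]
  simp only [← measureReal_def, hgt, Finset.prod_const, Finset.card_univ]

lemma measureReal_iInf_fin_le_eq_one_sub_pow {Ω : Type*} [MeasurableSpace Ω] {μ : Measure Ω}
    [IsProbabilityMeasure μ] {τ : ℕ → Ω → ℝ} (hmeas : ∀ n, Measurable (τ n))
    (hindep : iIndepFun τ μ) (hident : ∀ n, μ.map (τ n) = μ.map (τ 0))
    {N : ℕ} (hN : 0 < N) (s : ℝ) :
    μ.real {ω | ⨅ n : Fin N, τ n ω ≤ s} = 1 - (1 - μ.real {ω | τ 0 ω ≤ s}) ^ N := by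
  have : Nonempty (Fin N) := Fin.pos_iff_nonempty.1 hN
  rw [measureReal_iInf_le_eq_one_sub_pow (τ := fun n : Fin N => τ n) (fun n => hmeas n)
    (hindep.precomp Fin.val_injective) fun n => ?_, Fintype.card_fin]
  exact congrArg ENNReal.toReal <|
    (IdentDistrib.mk (hmeas n).aemeasurable (hmeas 0).aemeasurable (hident n)).measure_mem_eq
      measurableSet_Iic

theorem min_iid_gumbel_limit_general
    {Ω : Type*} [MeasureSpace Ω] [IsProbabilityMeasure (ℙ : Measure Ω)]
    (τ : ℕ → Ω → ℝ)
    (hmeas : ∀ n, Measurable (τ n))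
    (hindep : iIndepFun τ ℙ)
    (hident : ∀ n, Measure.map (τ n) ℙ = Measure.map (τ 0) ℙ)
    (A C p : ℝ) (hA : 0 < A) (hC : 0 < C)
    (hshort : Tendsto
      (fun t : ℝ => (ℙ {ω | τ 0 ω ≤ t}).toReal / (A * t ^ p * Real.exp (-C / t)))
      (𝓝[>] (0 : ℝ)) (𝓝 1)) :
    ∀ x : ℝ,
      Tendsto
        (fun N : ℕ =>
          (ℙ {ω | ((⨅ n : Fin N, τ n ω) -
              (C / Real.log N + C * p * Real.log (Real.log N) / (Real.log N) ^ 2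
                - C * Real.log (A * C ^ p) / (Real.log N) ^ 2)) /
              (C / (Real.log N) ^ 2) ≤ x}).toReal)
        atTop (𝓝 (1 - Real.exp (-Real.exp x))) := by
  intro x
  set F : ℝ → ℝ := fun s => (ℙ : Measure Ω).real {ω | τ 0 ω ≤ s}
  set t : ℕ → ℝ := fun N => gumbelThreshold A C p x (log N)
  have hlog : Tendsto (fun N : ℕ => log N) atTop atTop :=
    tendsto_log_atTop.comp tendsto_natCast_atTop_atTop
  have hNF : Tendsto (fun N : ℕ => N * F (t N)) atTop (𝓝 (exp x)) := by
    have hF := (isEquivalent_of_tendsto_one hshort).comp_tendsto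
      ((tendsto_gumbelThreshold_atTop (A := A) p x hC).comp hlog)
    refine (IsEquivalent.refl.mul hF).symm.tendsto_nhds
      (((tendsto_exp_mul_tail_gumbelThreshold_atTop p x hA hC).comp hlog).congr' ?_)
    filter_upwards [eventually_gt_atTop 0] with N hN
    simp only [Function.comp_apply, Pi.mul_apply, exp_log (Nat.cast_pos.2 hN)]
  have hpow : Tendsto (fun N : ℕ => (1 - F (t N)) ^ N) atTop (𝓝 (exp (-exp x))) := by
    simpa [sub_eq_add_neg] using tendsto_one_add_pow_exp_of_tendsto (g := fun N => -F (t N))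
      (by simpa using hNF.neg)
  refine (tendsto_const_nhds.sub hpow).congr' ?_
  filter_upwards [eventually_gt_atTop 1] with N hN
  have hL : 0 < log N := log_pos (by exact_mod_cast hN)
  simp_rw [sub_div_le_iff_le_gumbelThreshold p x hC hL]
  rw [← measureReal_def,
    measureReal_iInf_fin_le_eq_one_sub_pow hmeas hindep hident (by omega)]

/-- Gumbel limit for the fastest FPT: if `P(τ ≤ t) ~ A t^p e^{−C/t}` as `t → 0+`
with `C > 0`, `A > 0`, `p ∈ ℝ`, for an iid sequence of nonnegative random
variables, then with `a_N = C/(ln N)²` and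
`b_N = C/ln N + C p ln(ln N)/(ln N)² − C ln(A C^p)/(ln N)²`, the rescaled minimum
`(T_N − b_N)/a_N` converges in distribution to the `Gumbel(0,1)` law with
survival function `exp(−e^x)` (whose CDF is continuous everywhere). -/
theorem min_iid_gumbel_limit
    {Ω : Type*} [MeasureSpace Ω] [IsProbabilityMeasure (ℙ : Measure Ω)]
    (τ : ℕ → Ω → ℝ)
    (hmeas : ∀ n, Measurable (τ n))
    (hnonneg : ∀ n ω, 0 ≤ τ n ω)
    (hindep : iIndepFun τ ℙ)
    (hident : ∀ n, Measure.map (τ n) ℙ = Measure.map (τ 0) ℙ)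
    (A C p : ℝ) (hA : 0 < A) (hC : 0 < C)
    (hshort : Tendsto
      (fun t : ℝ => (ℙ {ω | τ 0 ω ≤ t}).toReal / (A * t ^ p * Real.exp (-C / t)))
      (𝓝[>] (0 : ℝ)) (𝓝 1)) :
    ∀ x : ℝ,
      Tendsto
        (fun N : ℕ =>
          (ℙ {ω | ((⨅ n : Fin N, τ n ω) -
              (C / Real.log N + C * p * Real.log (Real.log N) / (Real.log N) ^ 2
                - C * Real.log (A * C ^ p) / (Real.log N) ^ 2)) /
              (C / (Real.log N) ^ 2) ≤ x}).toReal)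
        atTop (𝓝 (1 - Real.exp (-Real.exp x))) :=
  min_iid_gumbel_limit_general τ hmeas hindep hident A C p hA hC hshort
end

section
/- Let F(s) = (1/s)[1 − (κ̄/√s) B e^{−√s ℓ}] with constants κ̄ > 0, B > 0, ℓ > 0. Then the inverse Laplace transform of (κ̄ B/s^{3/2}) e^{−√s ℓ} gives the short-time asymptotics: the function g(t) whose Laplace transform is (1/s^{3/2}) e^{−√s ℓ} satisfies g(t) ~ (4/(√π ℓ²)) t^{3/2} e^{−ℓ²/(4t)} as t → 0+. Equivalently, ∫_0^∞ e^{−st} (4/(√π ℓ²)) t^{3/2} e^{−ℓ²/(4t)} dt ~ s^{−3/2} e^{−√s ℓ} as s → ∞. -/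
/-!
Write `J_ν = ∫₀^∞ t^ν e^{-st-c/t} dt`. The substitution `t = x²` and the Cauchy–Schlömilch
identity `∫₀^∞ e^{-(ax-b/x)²} dx = √π/(2a)` give `J_{-1/2} = √(π/s) e^{-2√(sc)}`; the inversion
`t ↦ c/(st)` gives `J_ν = (c/s)^{ν+1} J_{-ν-2}`, hence `J_{-3/2}`; and integrating the derivative of
`t^ν e^{-st-c/t}` gives `ν J_{ν-1} - s J_ν + c J_{ν-2} = 0`, which yields `J_{1/2}` and then `J_{3/2}`.
With `c = ℓ²/4` the ratio in question is exactly `1 + 3/(ℓ√s) + 3/(ℓ√s)²`.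
-/

open MeasureTheory Real Filter Topology Set

section Inversion

variable {E : Type*} [NormedAddCommGroup E] [NormedSpace ℝ E] {k : ℝ}

private lemma smul_rpow_neg_one_smul_comp_eq (g : ℝ → E) {x : ℝ} (hx : 0 < x) :
    k • ((|(-1 : ℝ)| * x ^ ((-1 : ℝ) - 1)) • g (k * x ^ (-1 : ℝ))) = (k / x ^ 2) • g (k / x) := by
  rw [smul_smul, rpow_neg_one, ← div_eq_mul_inv, show (-1 : ℝ) - 1 = -2 by norm_num,
    rpow_neg hx.le, rpow_two, abs_neg, abs_one, one_mul]
  simp only [div_eq_mul_inv]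

lemma integral_comp_div_Ioi (g : ℝ → E) (hk : 0 < k) :
    ∫ x in Ioi 0, (k / x ^ 2) • g (k / x) = ∫ x in Ioi 0, g x := by
  have h := integral_comp_rpow_Ioi (fun y => g (k * y)) (p := -1) (by norm_num)
  rw [integral_comp_mul_left_Ioi g 0 hk, mul_zero] at h
  rw [← smul_inv_smul₀ hk.ne' (∫ x in Ioi 0, g x), ← h, ← integral_smul]
  exact setIntegral_congr_fun measurableSet_Ioi fun x hx =>
    (smul_rpow_neg_one_smul_comp_eq g hx).symm

lemma integrableOn_Ioi_comp_div_iff (g : ℝ → E) (hk : 0 < k) :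
    IntegrableOn (fun x => (k / x ^ 2) • g (k / x)) (Ioi 0) ↔ IntegrableOn g (Ioi 0) := by
  have h := integrableOn_Ioi_comp_mul_left_iff g 0 hk
  rw [mul_zero] at h
  refine Iff.trans ?_ ((integrable_smul_iff hk.ne' _).trans
    ((integrableOn_Ioi_comp_rpow_iff (fun y => g (k * y)) (p := -1) (by norm_num)).trans h))
  exact integrableOn_congr_fun (fun x hx => (smul_rpow_neg_one_smul_comp_eq g hx).symm)
    measurableSet_Ioi

end Inversion

section CauchySchlomilch

variable {a b : ℝ}

lemma image_mul_sub_div_Ioi (ha : 0 < a) (hb : 0 < b) :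
    (fun x => a * x - b / x) '' Ioi 0 = univ := by
  refine eq_univ_of_forall fun u => ?_
  set r := √(u ^ 2 + 4 * a * b)
  have hr : r ^ 2 = u ^ 2 + 4 * a * b := sq_sqrt (by positivity)
  have hur : |u| < r := by
    rw [← sqrt_sq_eq_abs]
    exact sqrt_lt_sqrt (sq_nonneg u) (by nlinarith)
  have hur' : 0 < u + r := by linarith [neg_abs_le u]
  refine ⟨(u + r) / (2 * a), div_pos hur' (by positivity), ?_⟩
  field_simp
  linear_combination hr

lemma strictMonoOn_mul_sub_div (ha : 0 < a) (hb : 0 < b) :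
    StrictMonoOn (fun x => a * x - b / x) (Ioi 0) := fun _ hx _ _ hxy =>
  sub_lt_sub (mul_lt_mul_of_pos_left hxy ha) (div_lt_div_of_pos_left hb hx hxy)

lemma hasDerivAt_mul_sub_div {x : ℝ} (hx : x ≠ 0) :
    HasDerivAt (fun x => a * x - b / x) (a + b / x ^ 2) x := by
  have h := ((hasDerivAt_id' x).const_mul a).sub ((hasDerivAt_inv hx).const_mul b)
  exact h.congr_deriv (by ring)

lemma integrableOn_add_div_sq_mul_exp_neg_sq (ha : 0 < a) (hb : 0 < b) :
    IntegrableOn (fun x => (a + b / x ^ 2) * exp (-(a * x - b / x) ^ 2)) (Ioi 0) := by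
  have h := integrableOn_image_iff_integrableOn_abs_deriv_smul measurableSet_Ioi
    (fun x hx => (hasDerivAt_mul_sub_div hx.out.ne').hasDerivWithinAt)
    (strictMonoOn_mul_sub_div ha hb).injOn (fun u => exp (-u ^ 2))
  rw [image_mul_sub_div_Ioi ha hb, integrableOn_univ] at h
  refine (h.mp ?_).congr_fun (fun x hx => ?_) measurableSet_Ioi
  · simpa using integrable_exp_neg_mul_sq one_pos
  · dsimp only
    rw [smul_eq_mul, abs_of_pos (by have := hx.out; positivity)]

lemma integral_add_div_sq_mul_exp_neg_sq (ha : 0 < a) (hb : 0 < b) :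
    ∫ x in Ioi 0, (a + b / x ^ 2) * exp (-(a * x - b / x) ^ 2) = √π := by
  have h := integral_image_eq_integral_abs_deriv_smul measurableSet_Ioi
    (fun x hx => (hasDerivAt_mul_sub_div hx.out.ne').hasDerivWithinAt)
    (strictMonoOn_mul_sub_div ha hb).injOn (fun u => exp (-u ^ 2))
  rw [image_mul_sub_div_Ioi ha hb, setIntegral_univ] at h
  have hgauss : ∫ u, exp (-u ^ 2) = √π := by simpa using integral_gaussian 1
  rw [← hgauss, h]
  refine setIntegral_congr_fun measurableSet_Ioi fun x hx => ?_
  rw [smul_eq_mul, abs_of_pos (by have := hx.out; positivity)]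

lemma integrableOn_exp_neg_sq_mul_sub_div (ha : 0 < a) (hb : 0 < b) :
    IntegrableOn (fun x => exp (-(a * x - b / x) ^ 2)) (Ioi 0) := by
  refine ((integrableOn_add_div_sq_mul_exp_neg_sq ha hb).const_mul a⁻¹).mono'
    (by fun_prop) ?_
  filter_upwards [ae_restrict_mem measurableSet_Ioi] with x hx
  rw [norm_of_nonneg (exp_pos _).le, ← mul_assoc, le_mul_iff_one_le_left (exp_pos _),
    inv_mul_eq_div, one_le_div ha]
  have := hx.out
  have : 0 ≤ b / x ^ 2 := by positivity
  linarith

lemma integral_exp_neg_sq_mul_sub_div (ha : 0 < a) (hb : 0 < b) :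
    ∫ x in Ioi 0, exp (-(a * x - b / x) ^ 2) = √π / (2 * a) := by
  -- `x ↦ (b/a)/x` preserves the integrand and trades the weight `a` for `b/x²`,
  -- so the two halves of the Gaussian integral `∫ (a + b/x²) e^{-(ax-b/x)²}` are equal.
  have htotal := integral_add_div_sq_mul_exp_neg_sq ha hb
  have hG := integrableOn_exp_neg_sq_mul_sub_div ha hb
  set G := fun x => exp (-(a * x - b / x) ^ 2)
  have hk : 0 < b / a := div_pos hb ha
  have hreflect : ∀ x ∈ Ioi (0 : ℝ), b / x ^ 2 * G x = a * ((b / a / x ^ 2) • G (b / a / x)) := by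
    intro x hx
    have hx := hx.out
    have hsymm : a * (b / a / x) - b / (b / a / x) = -(a * x - b / x) := by
      field_simp
      ring
    simp only [G, smul_eq_mul, hsymm, neg_sq]
    field_simp
  have hint : IntegrableOn (fun x => b / x ^ 2 * G x) (Ioi 0) :=
    IntegrableOn.congr_fun (((integrableOn_Ioi_comp_div_iff G hk).mpr hG).const_mul a)
      (fun x hx => (hreflect x hx).symm) measurableSet_Ioi
  simp only [add_mul] at htotal
  rw [integral_add (hG.const_mul a) hint, integral_const_mul,
    setIntegral_congr_fun measurableSet_Ioi hreflect, integral_const_mul,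
    integral_comp_div_Ioi G hk] at htotal
  field_simp
  linarith

end CauchySchlomilch

lemma rpow_le_rpow_add_rpow {x y z w : ℝ} (hx : 0 < x) (hyz : y ≤ z) (hzw : z ≤ w) :
    x ^ z ≤ x ^ y + x ^ w := by
  rcases le_total x 1 with hx1 | hx1
  · linarith [rpow_le_rpow_of_exponent_ge hx hx1 hyz, rpow_nonneg hx.le w]
  · linarith [rpow_le_rpow_of_exponent_le hx1 hzw, rpow_nonneg hx.le y]

noncomputable def besselKIntegrand (s c ν t : ℝ) : ℝ := t ^ ν * exp (-s * t - c / t)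

/-- For `s, c > 0` this is `2 (c/s)^{(ν+1)/2} K_{ν+1}(2√(sc))`, with `K` the modified Bessel
function of the second kind. -/
noncomputable def besselKIntegral (s c ν : ℝ) : ℝ := ∫ t in Ioi 0, besselKIntegrand s c ν t

section BesselK

variable {s c ν : ℝ}

lemma exp_neg_mul_sub_div_le (hc : 0 ≤ c) {t : ℝ} (ht : 0 ≤ t) :
    exp (-s * t - c / t) ≤ exp (-s * t) :=
  exp_le_exp.mpr (by linarith [div_nonneg hc ht])

lemma besselKIntegrand_nonneg {t : ℝ} (ht : 0 ≤ t) : 0 ≤ besselKIntegrand s c ν t :=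
  mul_nonneg (rpow_nonneg ht ν) (exp_pos _).le

lemma measurable_besselKIntegrand : Measurable (besselKIntegrand s c ν) := by
  unfold besselKIntegrand; fun_prop

lemma div_sq_mul_besselKIntegrand_div (hs : 0 < s) (hc : 0 < c) {x : ℝ} (hx : 0 < x) :
    c / s / x ^ 2 * besselKIntegrand s c ν (c / s / x) =
      (c / s) ^ (ν + 1) * besselKIntegrand s c (-ν - 2) x := by
  have hk : 0 < c / s := div_pos hc hs
  have hexp : -s * (c / s / x) - c / (c / s / x) = -s * x - c / x := by
    field_simp
    ring
  rw [besselKIntegrand, besselKIntegrand, hexp, div_rpow hk.le hx.le, rpow_add_one hk.ne',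
    rpow_sub hx, rpow_neg hx.le, rpow_two]
  field_simp

lemma integrableOn_besselKIntegrand_iff (hs : 0 < s) (hc : 0 < c) :
    IntegrableOn (besselKIntegrand s c ν) (Ioi 0) ↔
      IntegrableOn (besselKIntegrand s c (-ν - 2)) (Ioi 0) := by
  have hk : 0 < c / s := div_pos hc hs
  rw [← integrableOn_Ioi_comp_div_iff _ hk]
  refine Iff.trans ?_ (integrable_smul_iff (rpow_pos_of_pos hk (ν + 1)).ne' _)
  exact integrableOn_congr_fun (fun x hx => div_sq_mul_besselKIntegrand_div hs hc hx.out)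
    measurableSet_Ioi

lemma besselKIntegral_eq_rpow_mul (hs : 0 < s) (hc : 0 < c) (ν : ℝ) :
    besselKIntegral s c ν = (c / s) ^ (ν + 1) * besselKIntegral s c (-ν - 2) := by
  rw [besselKIntegral, besselKIntegral, ← integral_comp_div_Ioi _ (div_pos hc hs),
    ← integral_const_mul]
  exact setIntegral_congr_fun measurableSet_Ioi fun x hx =>
    div_sq_mul_besselKIntegrand_div hs hc hx.out

lemma integrableOn_besselKIntegrand_of_neg_one_lt (hs : 0 < s) (hc : 0 < c) (hν : -1 < ν) :
    IntegrableOn (besselKIntegrand s c ν) (Ioi 0) := by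
  refine (integrableOn_rpow_mul_exp_neg_mul_rpow hν one_pos hs).mono'
    measurable_besselKIntegrand.aestronglyMeasurable ?_
  filter_upwards [ae_restrict_mem measurableSet_Ioi] with t ht
  rw [norm_of_nonneg (besselKIntegrand_nonneg ht.out.le), rpow_one]
  exact mul_le_mul_of_nonneg_left (exp_neg_mul_sub_div_le hc.le ht.out.le) (rpow_nonneg ht.out.le ν)

lemma integrableOn_besselKIntegrand_of_lt_neg_one (hs : 0 < s) (hc : 0 < c) (hν : ν < -1) :
    IntegrableOn (besselKIntegrand s c ν) (Ioi 0) :=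
  (integrableOn_besselKIntegrand_iff hs hc).mpr
    (integrableOn_besselKIntegrand_of_neg_one_lt hs hc (by linarith))

lemma integrableOn_besselKIntegrand (hs : 0 < s) (hc : 0 < c) (ν : ℝ) :
    IntegrableOn (besselKIntegrand s c ν) (Ioi 0) := by
  rcases lt_trichotomy ν (-1) with hν | rfl | hν
  · exact integrableOn_besselKIntegrand_of_lt_neg_one hs hc hν
  · have h₁ := integrableOn_besselKIntegrand_of_lt_neg_one hs hc (ν := -3 / 2) (by norm_num)
    have h₂ := integrableOn_besselKIntegrand_of_neg_one_lt hs hc (ν := -1 / 2) (by norm_num)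
    refine (h₁.add h₂).mono' measurable_besselKIntegrand.aestronglyMeasurable ?_
    filter_upwards [ae_restrict_mem measurableSet_Ioi] with t ht
    rw [norm_of_nonneg (besselKIntegrand_nonneg ht.out.le)]
    simp only [Pi.add_apply, besselKIntegrand, ← add_mul]
    exact mul_le_mul_of_nonneg_right
      (rpow_le_rpow_add_rpow ht.out (by norm_num) (by norm_num)) (exp_pos _).le
  · exact integrableOn_besselKIntegrand_of_neg_one_lt hs hc hν

lemma hasDerivAt_besselKIntegrand {t : ℝ} (ht : 0 < t) :
    HasDerivAt (besselKIntegrand s c ν)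
      (ν * besselKIntegrand s c (ν - 1) t - s * besselKIntegrand s c ν t +
        c * besselKIntegrand s c (ν - 2) t) t := by
  have h := (hasDerivAt_rpow_const (p := ν) (Or.inl ht.ne')).mul
    (((hasDerivAt_id' t).const_mul (-s)).sub ((hasDerivAt_inv ht.ne').const_mul c)).exp
  refine h.congr_deriv ?_
  simp only [besselKIntegrand, Pi.sub_apply, rpow_sub ht, rpow_one, rpow_two, div_eq_mul_inv]
  field_simp
  ring

lemma continuousWithinAt_besselKIntegrand_zero (hs : 0 ≤ s) (hc : 0 ≤ c) (hν : 0 < ν) :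
    ContinuousWithinAt (besselKIntegrand s c ν) (Ici 0) 0 := by
  have hpow : Tendsto (fun t : ℝ => t ^ ν) (𝓝[Ici 0] 0) (𝓝 0) := by
    simpa [zero_rpow hν.ne'] using
      (continuousAt_rpow_const 0 ν (Or.inr hν.le)).tendsto.mono_left nhdsWithin_le_nhds
  rw [ContinuousWithinAt, besselKIntegrand, zero_rpow hν.ne', zero_mul]
  refine squeeze_zero' ?_ ?_ hpow
  · filter_upwards [self_mem_nhdsWithin] with t ht using besselKIntegrand_nonneg ht.out
  · filter_upwards [self_mem_nhdsWithin] with t ht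
    have ht := ht.out
    refine mul_le_of_le_one_right (rpow_nonneg ht ν) (exp_le_one_iff.mpr ?_)
    nlinarith [div_nonneg hc ht]

lemma tendsto_besselKIntegrand_atTop (hs : 0 < s) (hc : 0 ≤ c) :
    Tendsto (besselKIntegrand s c ν) atTop (𝓝 0) := by
  refine squeeze_zero' ?_ ?_ (tendsto_rpow_mul_exp_neg_mul_atTop_nhds_zero ν s hs)
  · filter_upwards [eventually_ge_atTop 0] with t ht using besselKIntegrand_nonneg ht
  · filter_upwards [eventually_ge_atTop 0] with t ht
    exact mul_le_mul_of_nonneg_left (exp_neg_mul_sub_div_le hc ht) (rpow_nonneg ht ν)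

lemma besselKIntegral_recurrence (hs : 0 < s) (hc : 0 < c) (hν : 0 < ν) :
    ν * besselKIntegral s c (ν - 1) - s * besselKIntegral s c ν +
      c * besselKIntegral s c (ν - 2) = 0 := by
  have hint (μ : ℝ) : Integrable (besselKIntegrand s c μ) (volume.restrict (Ioi 0)) :=
    integrableOn_besselKIntegrand hs hc μ
  have hsub := ((hint (ν - 1)).const_mul ν).sub' ((hint ν).const_mul s)
  have h := integral_Ioi_of_hasDerivAt_of_tendsto
    (continuousWithinAt_besselKIntegrand_zero hs.le hc.le hν)
    (fun t ht => hasDerivAt_besselKIntegrand ht)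
    (hsub.fun_add ((hint (ν - 2)).const_mul c)) (tendsto_besselKIntegrand_atTop hs hc.le)
  rw [integral_add hsub ((hint _).const_mul c), integral_sub ((hint _).const_mul ν)
    ((hint ν).const_mul s), integral_const_mul, integral_const_mul, integral_const_mul,
    besselKIntegrand, zero_rpow hν.ne', zero_mul, sub_zero] at h
  exact h

lemma besselKIntegral_sq_sq_neg_one_half {a b : ℝ} (ha : 0 < a) (hb : 0 < b) :
    besselKIntegral (a ^ 2) (b ^ 2) (-1 / 2) = √π / a * exp (-(2 * a * b)) := by
  have hsubst : ∀ x ∈ Ioi (0 : ℝ),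
      (2 * x ^ ((2 : ℝ) - 1)) • besselKIntegrand (a ^ 2) (b ^ 2) (-1 / 2) (x ^ (2 : ℝ)) =
        2 * exp (-(2 * a * b)) * exp (-(a * x - b / x) ^ 2) := by
    intro x hx
    have hx := hx.out
    have hexp : -a ^ 2 * x ^ 2 - b ^ 2 / x ^ 2 = -(2 * a * b) + -(a * x - b / x) ^ 2 := by
      field_simp
      ring
    rw [besselKIntegrand, ← rpow_mul hx.le, smul_eq_mul, rpow_two, hexp, exp_add]
    norm_num [rpow_neg_one]
    field_simp
  rw [besselKIntegral, ← integral_comp_rpow_Ioi_of_pos two_pos,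
    setIntegral_congr_fun measurableSet_Ioi hsubst, integral_const_mul,
    integral_exp_neg_sq_mul_sub_div ha hb]
  field_simp

lemma besselKIntegral_sq_sq_neg_three_halves {a b : ℝ} (ha : 0 < a) (hb : 0 < b) :
    besselKIntegral (a ^ 2) (b ^ 2) (-3 / 2) = √π / b * exp (-(2 * a * b)) := by
  rw [besselKIntegral_eq_rpow_mul (by positivity) (by positivity),
    show -(-3 / 2 : ℝ) - 2 = -1 / 2 by norm_num, besselKIntegral_sq_sq_neg_one_half ha hb,
    show (-3 / 2 : ℝ) + 1 = -(1 / 2) by norm_num, rpow_neg (by positivity), ← sqrt_eq_rpow,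
    ← div_pow, sqrt_sq (by positivity)]
  field_simp

lemma besselKIntegral_sq_sq_three_halves {a b : ℝ} (ha : 0 < a) (hb : 0 < b) :
    besselKIntegral (a ^ 2) (b ^ 2) (3 / 2) =
      √π * exp (-(2 * a * b)) * (4 * a ^ 2 * b ^ 2 + 6 * a * b + 3) / (4 * a ^ 5) := by
  have hs : 0 < a ^ 2 := by positivity
  have hc : 0 < b ^ 2 := by positivity
  have h₁ := besselKIntegral_recurrence hs hc (ν := 1 / 2) (by norm_num)
  have h₃ := besselKIntegral_recurrence hs hc (ν := 3 / 2) (by norm_num)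
  rw [show (1 / 2 : ℝ) - 1 = -1 / 2 by norm_num, show (1 / 2 : ℝ) - 2 = -3 / 2 by norm_num,
    besselKIntegral_sq_sq_neg_one_half ha hb, besselKIntegral_sq_sq_neg_three_halves ha hb] at h₁
  rw [show (3 / 2 : ℝ) - 1 = 1 / 2 by norm_num, show (3 / 2 : ℝ) - 2 = -1 / 2 by norm_num,
    besselKIntegral_sq_sq_neg_one_half ha hb] at h₃
  field_simp at h₁ h₃ ⊢
  linear_combination (-2 * a ^ 2) * h₃ - 3 * h₁

end BesselK

lemma integral_exp_neg_mul_mul_rpow_three_halves_mul_exp {ℓ s : ℝ} (hℓ : 0 < ℓ) (hs : 0 < s) :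
    ∫ t in Ioi (0 : ℝ), exp (-s * t) *
        (4 / (√π * ℓ ^ 2) * t ^ ((3 : ℝ) / 2) * exp (-ℓ ^ 2 / (4 * t))) =
      s ^ (-(3 : ℝ) / 2) * exp (-√s * ℓ) * (1 + 3 / (ℓ * √s) + 3 / (ℓ * √s) ^ 2) := by
  obtain ⟨a, ha, rfl⟩ : ∃ a, 0 < a ∧ a ^ 2 = s := ⟨√s, sqrt_pos.mpr hs, sq_sqrt hs.le⟩
  have hintegrand (t : ℝ) : exp (-a ^ 2 * t) *
      (4 / (√π * ℓ ^ 2) * t ^ ((3 : ℝ) / 2) * exp (-ℓ ^ 2 / (4 * t))) =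
        4 / (√π * ℓ ^ 2) * besselKIntegrand (a ^ 2) ((ℓ / 2) ^ 2) (3 / 2) t := by
    rw [besselKIntegrand, sub_eq_add_neg, exp_add]
    ring_nf
  simp_rw [hintegrand]
  have hrpow : (a ^ 2) ^ (-(3 : ℝ) / 2) = (a ^ 3)⁻¹ := by
    rw [← rpow_natCast, ← rpow_mul ha.le, show ((2 : ℕ) : ℝ) * (-3 / 2) = -(3 : ℕ) by norm_num,
      rpow_neg ha.le, rpow_natCast]
  rw [integral_const_mul, ← besselKIntegral, besselKIntegral_sq_sq_three_halves ha (half_pos hℓ),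
    sqrt_sq ha.le, hrpow]
  field_simp
  ring

/-- Short-time asymptotics via Laplace transforms: for fixed `ℓ > 0`, the
Laplace transform of `t ↦ (4/(√π ℓ²)) t^{3/2} e^{−ℓ²/(4t)}` is asymptotically
equivalent to `s^{−3/2} e^{−ℓ√s}` as `s → ∞`. -/
theorem laplace_transform_short_time_asymptotics
    (ℓ : ℝ) (hℓ : 0 < ℓ) :
    Tendsto
      (fun s : ℝ =>
        (∫ t in Set.Ioi (0 : ℝ),
            Real.exp (-s * t) *
              (4 / (Real.sqrt Real.pi * ℓ ^ 2) * t ^ ((3 : ℝ) / 2) *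
                Real.exp (-ℓ ^ 2 / (4 * t)))) /
          (s ^ (-(3 : ℝ) / 2) * Real.exp (-Real.sqrt s * ℓ)))
      atTop (𝓝 1) := by
  have hlim : Tendsto (fun x : ℝ => 1 + 3 / x + 3 / x ^ 2) atTop (𝓝 1) := by
    simpa using (((tendsto_const_nhds (x := (3 : ℝ))).div_atTop tendsto_id).const_add 1).add
      ((tendsto_const_nhds (x := (3 : ℝ))).div_atTop (tendsto_pow_atTop two_ne_zero))
  refine (hlim.comp (tendsto_sqrt_atTop.const_mul_atTop hℓ)).congr' ?_
  filter_upwards [eventually_gt_atTop 0] with s hs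
  rw [Function.comp_apply, integral_exp_neg_mul_mul_rpow_three_halves_mul_exp hℓ hs,
    mul_div_cancel_left₀ _ (by positivity)]
end
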